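/- arXiv:math/0503567 — 2 statements merged into one kernel-verified Lean document; each statement's English description precedes it below -/
import Mathlib

section
/- Let M be the (n+2)-dimensional block-diagonal real matrix diag(A, B) where A is the 3×3 matrix with entries A₀₀ = sin²θ, A₀₁ = -sinθcosθ sin u, A₀₂ = sinθcosθ cos u, A₁₁ = cos²θ + sin²θ cos²u, A₁₂ = sin²θ sin u cos u, A₂₂ = cos²θ + sin²θ sin²u (A symmetric), and B = cos²θ · I_{n-2}. Then the multiset of eigenvalues of M is {0, 1, 1} ∪ {cos²θ (with multiplicity n-2)}. -/
open Real Polynomial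

lemma charpoly_smul_one (m : ℕ) (c : ℝ) :
    (c • (1 : Matrix (Fin m) (Fin m) ℝ)).charpoly = (X - C c) ^ m := by
  rw [Matrix.smul_one_eq_diagonal, Matrix.charpoly,
    show Matrix.charmatrix (Matrix.diagonal fun _ : Fin m => c)
      = Matrix.diagonal fun _ => (X : ℝ[X]) - C c by
        ext i j
        by_cases h : i = j
        · subst h; simp
        · rw [Matrix.charmatrix_apply_ne _ _ _ h]
          simp [Matrix.diagonal_apply_ne _ h, h]]
  simp [Matrix.det_diagonal]

lemma charpoly3 (θ u : ℝ) :
    (!![sin θ ^ 2, -(sin θ * cos θ) * sin u, sin θ * cos θ * cos u;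
            -(sin θ * cos θ) * sin u, cos θ ^ 2 + sin θ ^ 2 * cos u ^ 2,
              sin θ ^ 2 * sin u * cos u;
            sin θ * cos θ * cos u, sin θ ^ 2 * sin u * cos u,
              cos θ ^ 2 + sin θ ^ 2 * sin u ^ 2] : Matrix (Fin 3) (Fin 3) ℝ).charpoly
      = X * (X - 1) ^ 2 := by
  rw [Matrix.charpoly, Matrix.det_fin_three]
  simp only [Matrix.charmatrix_apply, Matrix.diagonal_apply, Matrix.map_apply, Matrix.of_apply,
    Matrix.cons_val', Matrix.cons_val_zero, Matrix.cons_val_one, Matrix.head_cons,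
    Matrix.empty_val', Matrix.cons_val_fin_one, Matrix.cons_val_two, Matrix.tail_cons]
  apply Polynomial.funext
  intro x
  have hs := sin_sq_add_cos_sq θ
  have hu := sin_sq_add_cos_sq u
  set s := sin θ; set c := cos θ; set su := sin u; set cu := cos u
  simp only [eval_mul, eval_add, eval_sub, eval_pow, eval_neg, eval_X, eval_C, eval_one,
    eval_zero, Matrix.smul_apply, smul_eval, if_true, if_false]
  norm_num [Fin.ext_iff]
  linear_combination
    (-c^2*cu^2 + c^2*cu^4 - c^2*su^2 + 2*c^2*su^2*cu^2 + c^2*su^4 - c^4 + 2*c^4*cu^2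
      - c^4*cu^4 + 2*c^4*su^2 - 2*c^4*su^2*cu^2 - c^4*su^4 - s^2*c^2*cu^2 + s^2*c^2*cu^4
      - s^2*c^2*su^2 + 2*s^2*c^2*su^2*cu^2 + s^2*c^2*su^4 + x*cu^2 + x*su^2 + 2*x*c^2
      - x*c^2*cu^2 - x*c^2*su^2 + x*s^2*cu^2 + x*s^2*su^2 - x^2 - x^2*cu^2 - x^2*su^2) * hs
    + (c^2*cu^2 + c^2*su^2 + c^4 - 2*c^4*cu^2 - 2*c^4*su^2 - c^6 + c^6*cu^2 + c^6*su^2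
      + x - 2*x*c^2 + x*c^4 - x^2 + x^2*c^2) * hu

/-- the block-diagonal matrix `M = diag(A, cos²θ·I)` representing
`(∇ξ)ᵀ(∇ξ)` has eigenvalues (with multiplicity) `0, 1, 1` together with
`cos²θ` with multiplicity `n - 2`; equivalently its characteristic polynomial is
`X (X-1)² (X - cos²θ)^{n-2}`. -/
theorem stmt_1 (n : ℕ) (hn : 2 ≤ n) (θ u : ℝ) :
    (Matrix.fromBlocks
        (!![sin θ ^ 2, -(sin θ * cos θ) * sin u, sin θ * cos θ * cos u;
            -(sin θ * cos θ) * sin u, cos θ ^ 2 + sin θ ^ 2 * cos u ^ 2,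
              sin θ ^ 2 * sin u * cos u;
            sin θ * cos θ * cos u, sin θ ^ 2 * sin u * cos u,
              cos θ ^ 2 + sin θ ^ 2 * sin u ^ 2] : Matrix (Fin 3) (Fin 3) ℝ)
        0 0
        (cos θ ^ 2 • (1 : Matrix (Fin (n - 2)) (Fin (n - 2)) ℝ))).charpoly =
      X * (X - 1) ^ 2 * (X - C (cos θ ^ 2)) ^ (n - 2) := by
  rw [Matrix.charpoly_fromBlocks_zero₂₁, charpoly3, charpoly_smul_one]
end

section
/- On the surface with metric ds² = du² + e^{2uv}dv², let ξ = ∂/∂u and e₁ = e^{-uv}∂/∂v. Then ∇_{e₁}ξ = v·e₁, the singular value of ∇ξ is λ = v, and e₁(λ) = e^{-uv}; consequently the mean curvature of ξ(M) ⊂ T₁M, computed by H = e₁(λ)/(2(1+λ²)^{3/2}), equals e^{-uv}/(2(1+v²)^{3/2}). -/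
noncomputable section

def pd2 (i : Fin 2) (f : ℝ × ℝ → ℝ) (p : ℝ × ℝ) : ℝ :=
  fderiv ℝ f p (if i = 0 then ((1 : ℝ), (0 : ℝ)) else ((0 : ℝ), (1 : ℝ)))

def Γ2 (gm : ℝ × ℝ → Matrix (Fin 2) (Fin 2) ℝ) (k i j : Fin 2) (p : ℝ × ℝ) : ℝ :=
  (1 / 2) * ∑ l, (gm p)⁻¹ k l *
    (pd2 i (fun q => gm q l j) p + pd2 j (fun q => gm q l i) p - pd2 l (fun q => gm q i j) p)

def cov2 (gm : ℝ × ℝ → Matrix (Fin 2) (Fin 2) ℝ)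
    (X Y : ℝ × ℝ → Fin 2 → ℝ) (p : ℝ × ℝ) (k : Fin 2) : ℝ :=
  (∑ i, X p i * pd2 i (fun q => Y q k) p) + ∑ i, ∑ j, X p i * Y p j * Γ2 gm k i j p

lemma pd2_const (i : Fin 2) (c : ℝ) (p : ℝ × ℝ) : pd2 i (fun _ => c) p = 0 := by
  simp [pd2, fderiv_const]

lemma pd2_snd (i : Fin 2) (p : ℝ × ℝ) :
    pd2 i (fun q => q.2) p = if i = 0 then 0 else 1 := by
  have h : fderiv ℝ (fun q : ℝ × ℝ => q.2) p = ContinuousLinearMap.snd ℝ ℝ ℝ :=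
    (hasFDerivAt_snd).fderiv
  by_cases hi : i = 0 <;> simp [pd2, h, hi]

lemma pd2_exp (i : Fin 2) (p : ℝ × ℝ) :
    pd2 i (fun q => Real.exp (2 * q.1 * q.2)) p =
      (if i = 0 then 2 * p.2 else 2 * p.1) * Real.exp (2 * p.1 * p.2) := by
  have h : HasFDerivAt (fun q : ℝ × ℝ => (2:ℝ) * q.1 * q.2) _ p :=
    ((hasFDerivAt_fst (𝕜 := ℝ) (p := p)).const_mul (2:ℝ)).mul
      (hasFDerivAt_snd (𝕜 := ℝ) (p := p))
  have h2 := h.exp.fderiv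
  by_cases hi : i = 0 <;> simp [pd2, h2, hi] <;> ring

lemma inv_gm (p : ℝ × ℝ) :
    (!![1, 0; 0, Real.exp (2 * p.1 * p.2)] : Matrix (Fin 2) (Fin 2) ℝ)⁻¹ =
      !![1, 0; 0, Real.exp (-(2 * p.1 * p.2))] := by
  apply Matrix.inv_eq_right_inv
  ext i j
  fin_cases i <;> fin_cases j <;>
    simp [Matrix.mul_apply, Fin.sum_univ_two, ← Real.exp_add]

/-- on the surface `ds² = du² + e^{2uv} dv²`, for `ξ = ∂/∂u` and
`e₁ = e^{-uv} ∂/∂v` one has `∇_{e₁}ξ = v e₁`, so the singular value of `∇ξ` is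
`λ = v`, with `e₁(λ) = e^{-uv}`; hence the mean curvature
`H = e₁(λ)/(2(1+λ²)^{3/2})` of `ξ(M) ⊂ T₁M` equals `e^{-uv}/(2(1+v²)^{3/2})`. -/
theorem stmt_12 :
    let gm : ℝ × ℝ → Matrix (Fin 2) (Fin 2) ℝ :=
      fun p => !![1, 0; 0, Real.exp (2 * p.1 * p.2)]
    let ξ : ℝ × ℝ → Fin 2 → ℝ := fun _ => ![1, 0]
    let e₁ : ℝ × ℝ → Fin 2 → ℝ := fun p => ![0, Real.exp (-(p.1 * p.2))]
    let lam : ℝ × ℝ → ℝ := fun p => p.2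
    ∀ p : ℝ × ℝ,
      (∀ k : Fin 2, cov2 gm e₁ ξ p k = lam p * e₁ p k) ∧
      (∑ i, e₁ p i * pd2 i lam p) = Real.exp (-(p.1 * p.2)) ∧
      (∑ i, e₁ p i * pd2 i lam p) / (2 * (1 + lam p ^ 2) ^ ((3 : ℝ) / 2)) =
        Real.exp (-(p.1 * p.2)) / (2 * (1 + p.2 ^ 2) ^ ((3 : ℝ) / 2)) := by
  intro gm ξ e₁ lam p
  have hsum : (∑ i, e₁ p i * pd2 i lam p) = Real.exp (-(p.1 * p.2)) := by
    simp [Fin.sum_univ_two, e₁, lam, pd2_snd]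
  refine ⟨?_, hsum, by rw [hsum]⟩
  intro k
  have hΓ : ∀ k i j : Fin 2, Γ2 gm k i j p =
      if k = 1 ∧ ((i = 0 ∧ j = 1) ∨ (i = 1 ∧ j = 0)) then p.2
      else if k = 0 ∧ i = 1 ∧ j = 1 then -p.2 * Real.exp (2 * p.1 * p.2)
      else if k = 1 ∧ i = 1 ∧ j = 1 then p.1
      else 0 := by
    intro k i j
    fin_cases k <;> fin_cases i <;> fin_cases j <;>
      simp [Γ2, gm, Fin.sum_univ_two, inv_gm, pd2_const, pd2_exp, Real.exp_neg] <;>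
      field_simp <;> ring
  fin_cases k <;>
    simp [cov2, Fin.sum_univ_two, hΓ, ξ, e₁, lam, pd2_const] <;> ring
end
end
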